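/- Every weakly l.f.g.u. weakly positive monoid is factorable: if 𝓗 = (H, ≼) is a weakly positive monoid such that the germ of 𝓗 at every ≼-non-unit is an f.g.u. premonoid, then every ≼-non-unit of H is a non-empty product of ≼-irreducibles. -/

import Mathlib

/-!
In a weakly positive monoid every divisor of `x` lies `≼`-below `x`. If `H = ⟨H^× A H^×⟩`
with `A` finite, a non-unit `u a v` (`a ∈ A`) that is not irreducible splits into factors strictly
below `a`; writing these as products of sandwiched generators, all their letters are strictly
below `a`, so induction along `≺` on the finite set `A` shows that every non-unit is a product
of irreducibles. For the germ `K` at `x`, every divisor of an element of `K` dividing `x` lies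
in `K`, so the irreducibles of `K` occurring in a factorization of `x` are irreducible in `H`.
-/

open Pointwise

namespace FactPaper

/-- `u` is a `≼`-unit for the preorder-like relation `r` on a monoid. -/
def RUnit {M : Type*} [Monoid M] (r : M → M → Prop) (u : M) : Prop :=
  r u 1 ∧ r 1 u

/-- `u` is a `≼`-non-unit. -/
def RNonUnit {M : Type*} [Monoid M] (r : M → M → Prop) (u : M) : Prop :=
  ¬ RUnit r u

/-- The strict part `≺` of the relation `r`. -/
def RLt {M : Type*} (r : M → M → Prop) (x y : M) : Prop :=
  r x y ∧ ¬ r y x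

/-- `a` is a `≼`-irreducible. -/
def RIrred {M : Type*} [Monoid M] (r : M → M → Prop) (a : M) : Prop :=
  RNonUnit r a ∧
    ∀ y z : M, RNonUnit r y → RNonUnit r z → RLt r y a → RLt r z a → a ≠ y * z

/-- `a` is a `≼`-atom. -/
def RAtom {M : Type*} [Monoid M] (r : M → M → Prop) (a : M) : Prop :=
  RNonUnit r a ∧ ∀ y z : M, RNonUnit r y → RNonUnit r z → a ≠ y * z

/-- `a` is a `≼`-quark. -/
def RQuark {M : Type*} [Monoid M] (r : M → M → Prop) (a : M) : Prop :=
  RNonUnit r a ∧ ¬ ∃ b : M, RNonUnit r b ∧ RLt r b a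

/-- The divisibility preorder: `Dvd2 x y` iff `y ∈ M x M`. -/
def Dvd2 {M : Type*} [Monoid M] (x y : M) : Prop :=
  ∃ u v : M, y = u * x * v

/-- The restriction of a relation on `M` to a submonoid `K`. -/
def SubRel {M : Type*} [Monoid M] (r : M → M → Prop) (K : Submonoid M) (a b : K) : Prop :=
  r (a : M) (b : M)

/-- The preorder `⊑` on words induced by `r`: an injection of indices matching
`r`-equivalent letters. -/
def WordLe {M : Type*} (r : M → M → Prop) (l m : List M) : Prop :=
  ∃ σ : Fin l.length ↪ Fin m.length,
    ∀ i : Fin l.length, r (l.get i) (m.get (σ i)) ∧ r (m.get (σ i)) (l.get i)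

/-- `⊑`-equivalence of words. -/
def WordEquiv {M : Type*} (r : M → M → Prop) (l m : List M) : Prop :=
  WordLe r l m ∧ WordLe r m l

/-- `l` is a `≼`-factorization of `x`: a word of `≼`-irreducibles with product `x`. -/
def IsFac {M : Type*} [Monoid M] (r : M → M → Prop) (x : M) (l : List M) : Prop :=
  (∀ a ∈ l, RIrred r a) ∧ l.prod = x

/-- `l` is a minimal `≼`-factorization of `x`: a `⊑`-minimal `≼`-factorization. -/
def IsMinFac {M : Type*} [Monoid M] (r : M → M → Prop) (x : M) (l : List M) : Prop :=
  IsFac r x l ∧ ∀ m : List M, IsFac r x m → WordLe r m l → WordLe r l m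

/-- `l` is an atomic `≼`-factorization of `x`. -/
def IsAtomicFac {M : Type*} [Monoid M] (r : M → M → Prop) (x : M) (l : List M) : Prop :=
  (∀ a ∈ l, RAtom r a) ∧ l.prod = x

/-- `l` is a minimal atomic `≼`-factorization of `x`. -/
def IsMinAtomicFac {M : Type*} [Monoid M] (r : M → M → Prop) (x : M) (l : List M) : Prop :=
  IsMinFac r x l ∧ ∀ a ∈ l, RAtom r a

/-- Every `≼`-non-unit is a non-empty product of `≼`-irreducibles. -/
def Factorable {M : Type*} [Monoid M] (r : M → M → Prop) : Prop :=
  ∀ x : M, RNonUnit r x →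
    ∃ l : List M, l ≠ [] ∧ (∀ a ∈ l, RIrred r a) ∧ l.prod = x

/-- Every `≼`-non-unit is a non-empty product of `≼`-atoms. -/
def Atomic {M : Type*} [Monoid M] (r : M → M → Prop) : Prop :=
  ∀ x : M, RNonUnit r x →
    ∃ l : List M, l ≠ [] ∧ (∀ a ∈ l, RAtom r a) ∧ l.prod = x

/-- The premonoid `(M, r)` is finitely generated up to units. -/
def IsFGU {M : Type*} [Monoid M] (r : M → M → Prop) : Prop :=
  ∃ A : Set M, A.Finite ∧
    Submonoid.closure
      {w : M | ∃ u a v : M, RUnit r u ∧ a ∈ A ∧ RUnit r v ∧ w = u * a * v} = ⊤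

/-- The submonoid generated by the `∣_M`-divisors of `x` (ground monoid of the germ of a
premonoid at `x`). -/
def GermSub {M : Type*} [Monoid M] (x : M) : Submonoid M :=
  Submonoid.closure {y : M | Dvd2 y x}

/-- Membership in the smallest divisor-closed submonoid containing `x`. -/
inductive InDC {M : Type*} [Monoid M] (x : M) : M → Prop
  | base : InDC x x
  | one : InDC x 1
  | mul {a b : M} : InDC x a → InDC x b → InDC x (a * b)
  | dvd {a b : M} : InDC x b → Dvd2 a b → InDC x a

/-- The smallest divisor-closed submonoid of `M` containing `x`. -/
def DCSub {M : Type*} [Monoid M] (x : M) : Submonoid M where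
  carrier := {y : M | InDC x y}
  mul_mem' := fun ha hb => InDC.mul ha hb
  one_mem' := InDC.one

/-- `(M, r)` is a weakly positive monoid. -/
def WeaklyPositive {M : Type*} [Monoid M] (r : M → M → Prop) : Prop :=
  (∀ x u v : M, RUnit r u → RUnit r v → r (u * x * v) x) ∧
    (∀ x a b : M, r x (a * x * b))

/-- `(M, r)` is locally of finite type (loft). -/
def IsLoft {M : Type*} [Monoid M] (r : M → M → Prop) : Prop :=
  ∀ x : M, RNonUnit r x →
    ∃ A : Set M, A.Finite ∧ A ⊆ {a : M | RIrred r a} ∧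
      ∀ l : List M, IsFac r x l →
        ∃ m : List M, (∀ a ∈ m, a ∈ A) ∧ WordEquiv r l m

/-- `(M, r)` is BF-factorable. -/
def IsBFFactorable {M : Type*} [Monoid M] (r : M → M → Prop) : Prop :=
  ∀ x : M, RNonUnit r x →
    {n : ℕ | ∃ l : List M, IsFac r x l ∧ l.length = n}.Finite ∧
      {n : ℕ | ∃ l : List M, IsFac r x l ∧ l.length = n}.Nonempty

/-- `(M, r)` is BmF-factorable. -/
def IsBmFFactorable {M : Type*} [Monoid M] (r : M → M → Prop) : Prop :=
  ∀ x : M, RNonUnit r x →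
    {n : ℕ | ∃ l : List M, IsMinFac r x l ∧ l.length = n}.Finite ∧
      {n : ℕ | ∃ l : List M, IsMinFac r x l ∧ l.length = n}.Nonempty

/-- `(M, r)` is FF-factorable: modulo `⊑`-equivalence, every `≼`-non-unit has finitely
many (and at least one) `≼`-factorizations. -/
def IsFFFactorable {M : Type*} [Monoid M] (r : M → M → Prop) : Prop :=
  ∀ x : M, RNonUnit r x →
    (∃ l : List M, IsFac r x l) ∧
      ∃ F : Set (List M), F.Finite ∧
        ∀ l : List M, IsFac r x l → ∃ m ∈ F, IsFac r x m ∧ WordEquiv r l m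

/-- `(M, r)` is FmF-factorable. -/
def IsFmFFactorable {M : Type*} [Monoid M] (r : M → M → Prop) : Prop :=
  ∀ x : M, RNonUnit r x →
    (∃ l : List M, IsMinFac r x l) ∧
      ∃ F : Set (List M), F.Finite ∧
        ∀ l : List M, IsMinFac r x l → ∃ m ∈ F, IsMinFac r x m ∧ WordEquiv r l m

/-- `(M, r)` is FF-atomic. -/
def IsFFAtomic {M : Type*} [Monoid M] (r : M → M → Prop) : Prop :=
  ∀ x : M, RNonUnit r x →
    (∃ l : List M, IsAtomicFac r x l) ∧
      ∃ F : Set (List M), F.Finite ∧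
        ∀ l : List M, IsAtomicFac r x l → ∃ m ∈ F, IsAtomicFac r x m ∧ WordEquiv r l m

/-- `(M, r)` is FmF-atomic. -/
def IsFmFAtomic {M : Type*} [Monoid M] (r : M → M → Prop) : Prop :=
  ∀ x : M, RNonUnit r x →
    (∃ l : List M, IsMinAtomicFac r x l) ∧
      ∃ F : Set (List M), F.Finite ∧
        ∀ l : List M, IsMinAtomicFac r x l → ∃ m ∈ F, IsMinAtomicFac r x m ∧ WordEquiv r l m


section Closure

variable {M : Type*} [Monoid M]

theorem dvd2_prod_of_mem {l : List M} {w : M} (hw : w ∈ l) : Dvd2 w l.prod := by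
  obtain ⟨s, t, rfl⟩ := List.append_of_mem hw
  exact ⟨s.prod, t.prod, by simp [List.prod_append, mul_assoc]⟩

theorem Dvd2.trans {a b c : M} (hab : Dvd2 a b) (hbc : Dvd2 b c) : Dvd2 a c := by
  obtain ⟨u, v, rfl⟩ := hab
  obtain ⟨p, q, rfl⟩ := hbc
  exact ⟨p * u, v * q, by simp only [mul_assoc]⟩

theorem mem_closure_dvd2_of_mem_closure {S : Set M} {y : M}
    (hy : y ∈ Submonoid.closure S) : y ∈ Submonoid.closure {s ∈ S | Dvd2 s y} := by
  obtain ⟨l, hlS, rfl⟩ := Submonoid.exists_list_of_mem_closure hy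
  exact Submonoid.list_prod_mem _ fun w hw =>
    Submonoid.subset_closure ⟨hlS w hw, dvd2_prod_of_mem hw⟩

theorem mem_or_mem_closure_of_mem_closure_union (U : Submonoid M) {S : Set M}
    (hS : ∀ u ∈ U, ∀ s ∈ S, ∀ v ∈ U, u * s * v ∈ S) {x : M}
    (hx : x ∈ Submonoid.closure ((U : Set M) ∪ S)) : x ∈ U ∨ x ∈ Submonoid.closure S := by
  suffices x ∈ U ∨ ∀ u ∈ U, ∀ v ∈ U, u * x * v ∈ Submonoid.closure S by
    refine this.imp_right fun h => ?_
    simpa using h 1 U.one_mem 1 U.one_mem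
  induction hx using Submonoid.closure_induction with
  | mem s hs =>
    exact hs.imp id fun hs u hu v hv => Submonoid.subset_closure (hS u hu s hs v hv)
  | one => exact Or.inl U.one_mem
  | mul x y _ _ hx hy =>
    rcases hx with hxU | hx <;> rcases hy with hyU | hy
    · exact Or.inl (U.mul_mem hxU hyU)
    · exact Or.inr fun u hu v hv => by
        simpa only [mul_assoc] using hy (u * x) (U.mul_mem hu hxU) v hv
    · exact Or.inr fun u hu v hv => by
        simpa only [mul_assoc] using hx u hu (y * v) (U.mul_mem hyU hv)
    · exact Or.inr fun u hu v hv => by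
        simpa only [mul_one, one_mul, mul_assoc] using
          Submonoid.mul_mem _ (hx u hu 1 U.one_mem) (hy 1 U.one_mem v hv)

end Closure

theorem RLt.isStrictOrder {M : Type*} {r : M → M → Prop} (htrans : Transitive r) :
    IsStrictOrder M (RLt r) where
  irrefl _ h := h.2 h.1
  trans _ _ _ hab hbc := ⟨htrans hab.1 hbc.1, fun hca => hbc.2 (htrans hca hab.1)⟩

section WeaklyPositive

variable {M : Type*} [Monoid M] {r : M → M → Prop}

theorem WeaklyPositive.le_of_dvd2 (hwp : WeaklyPositive r) {x y : M} (h : Dvd2 x y) :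
    r x y := by
  obtain ⟨a, b, rfl⟩ := h
  exact hwp.2 x a b

theorem WeaklyPositive.refl (hwp : WeaklyPositive r) (x : M) : r x x :=
  hwp.le_of_dvd2 ⟨1, 1, by simp⟩

theorem WeaklyPositive.one_le (hwp : WeaklyPositive r) (x : M) : r 1 x :=
  hwp.le_of_dvd2 ⟨1, x, by simp⟩

theorem WeaklyPositive.rUnit_iff (hwp : WeaklyPositive r) {u : M} : RUnit r u ↔ r u 1 :=
  ⟨And.left, fun h => ⟨h, hwp.one_le u⟩⟩

theorem WeaklyPositive.rNonUnit_of_dvd2 (htrans : Transitive r) (hwp : WeaklyPositive r)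
    {a x : M} (ha : RNonUnit r a) (hax : Dvd2 a x) : RNonUnit r x := fun hx =>
  ha (hwp.rUnit_iff.2 (htrans (hwp.le_of_dvd2 hax) hx.1))

def WeaklyPositive.rUnits (htrans : Transitive r) (hwp : WeaklyPositive r) : Submonoid M where
  carrier := {u | RUnit r u}
  one_mem' := hwp.rUnit_iff.2 (hwp.refl 1)
  mul_mem' {u v} hu hv := by
    have huv : r (u * v * 1) v := hwp.1 v u 1 hu (hwp.rUnit_iff.2 (hwp.refl 1))
    exact hwp.rUnit_iff.2 (htrans (by simpa using huv) hv.1)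

theorem WeaklyPositive.factorable_of_mem_closure (hwp : WeaklyPositive r)
    (h : ∀ x, RNonUnit r x → x ∈ Submonoid.closure {a | RIrred r a}) : Factorable r := by
  intro x hx
  obtain ⟨l, hl, rfl⟩ := Submonoid.exists_list_of_mem_closure (h x hx)
  refine ⟨l, ?_, hl, rfl⟩
  rintro rfl
  exact hx (hwp.rUnit_iff.2 (hwp.refl 1))

/-- The set `𝓗^× A 𝓗^×` appearing in the definition of `IsFGU`. -/
def unitSandwich (r : M → M → Prop) (A : Set M) : Set M :=
  {w | ∃ u a v : M, RUnit r u ∧ a ∈ A ∧ RUnit r v ∧ w = u * a * v}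

theorem mul_mem_unitSandwich (htrans : Transitive r) (hwp : WeaklyPositive r) {A : Set M}
    {u s v : M} (hu : RUnit r u) (hs : s ∈ unitSandwich r A) (hv : RUnit r v) :
    u * s * v ∈ unitSandwich r A := by
  obtain ⟨u', a, v', hu', ha, hv', rfl⟩ := hs
  exact ⟨u * u', a, v' * v, (hwp.rUnits htrans).mul_mem hu hu', ha,
    (hwp.rUnits htrans).mul_mem hv' hv, by simp only [mul_assoc]⟩

theorem unitSandwich_subset_rUnits_union (htrans : Transitive r) (hwp : WeaklyPositive r)
    (A : Set M) :
    unitSandwich r A ⊆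
      (hwp.rUnits htrans : Set M) ∪ unitSandwich r {a ∈ A | RNonUnit r a} := by
  rintro _ ⟨u, a, v, hu, hA, hv, rfl⟩
  by_cases ha : RUnit r a
  · exact Or.inl <| (hwp.rUnits htrans).mul_mem ((hwp.rUnits htrans).mul_mem hu ha) hv
  · exact Or.inr ⟨u, a, v, hu, ⟨hA, ha⟩, hv, rfl⟩

theorem mem_closure_nonunit_sandwich (htrans : Transitive r) (hwp : WeaklyPositive r)
    {A : Set M} (hA : Submonoid.closure (unitSandwich r A) = ⊤) {x : M} (hx : RNonUnit r x) :
    x ∈ Submonoid.closure (unitSandwich r {a ∈ A | RNonUnit r a}) := by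
  have hxA : x ∈ Submonoid.closure ((hwp.rUnits htrans : Set M) ∪
      unitSandwich r {a ∈ A | RNonUnit r a}) :=
    Submonoid.closure_mono (unitSandwich_subset_rUnits_union htrans hwp A) (hA ▸ trivial)
  exact (mem_or_mem_closure_of_mem_closure_union _
    (fun u hu s hs v hv => mul_mem_unitSandwich htrans hwp hu hs hv) hxA).resolve_left hx

theorem unitSandwich_subset_closure_rIrred (htrans : Transitive r) (hwp : WeaklyPositive r)
    {A : Set M} (hfin : A.Finite) (hA : Submonoid.closure (unitSandwich r A) = ⊤) :
    unitSandwich r {a ∈ A | RNonUnit r a} ⊆ Submonoid.closure {a | RIrred r a} := by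
  have := RLt.isStrictOrder htrans
  suffices ∀ a ∈ {a ∈ A | RNonUnit r a}, ∀ u v, RUnit r u → RUnit r v →
      u * a * v ∈ Submonoid.closure {a | RIrred r a} by
    rintro _ ⟨u, a, v, hu, ha, hv, rfl⟩
    exact this a ha u v hu hv
  intro a ha
  refine (hfin.subset (Set.sep_subset _ _)).wellFoundedOn.induction (r := RLt r) ha
    (P := fun a => ∀ u v, RUnit r u → RUnit r v → u * a * v ∈ Submonoid.closure _) ?_
  intro a ha ih u v hu hv
  have hxa : r (u * a * v) a := hwp.1 a u v hu hv
  have below : ∀ y, RNonUnit r y → RLt r y (u * a * v) →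
      y ∈ Submonoid.closure {a | RIrred r a} := by
    intro y hy hyx
    refine Submonoid.closure_le.2 ?_ (mem_closure_dvd2_of_mem_closure
      (mem_closure_nonunit_sandwich htrans hwp hA hy))
    rintro _ ⟨⟨u', b, v', hu', hb, hv', rfl⟩, hdvd⟩
    have hby : r b y := htrans (hwp.le_of_dvd2 ⟨u', v', rfl⟩) (hwp.le_of_dvd2 hdvd)
    have hba : RLt r b a :=
      ⟨htrans hby (htrans hyx.1 hxa), fun hab => hyx.2 (htrans (htrans hxa hab) hby)⟩
    exact ih b hb hba u' v' hu' hv'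
  by_cases hirr : RIrred r (u * a * v)
  · exact Submonoid.subset_closure hirr
  have hx : RNonUnit r (u * a * v) := hwp.rNonUnit_of_dvd2 htrans ha.2 ⟨u, v, rfl⟩
  simp only [RIrred, hx, true_and, not_forall, not_not] at hirr
  obtain ⟨y, z, hy, hz, hyx, hzx, heq⟩ := hirr
  rw [heq]
  exact Submonoid.mul_mem _ (below y hy hyx) (below z hz hzx)

theorem mem_closure_rIrred_of_isFGU (htrans : Transitive r) (hwp : WeaklyPositive r)
    (hfgu : IsFGU r) {x : M} (hx : RNonUnit r x) : x ∈ Submonoid.closure {a | RIrred r a} := by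
  obtain ⟨A, hfin, hA⟩ := hfgu
  exact Submonoid.closure_le.2 (unitSandwich_subset_closure_rIrred htrans hwp hfin hA)
    (mem_closure_nonunit_sandwich htrans hwp hA hx)

end WeaklyPositive

section Germ

variable {M : Type*} [Monoid M] {r : M → M → Prop}

theorem transitive_subRel (htrans : Transitive r) (K : Submonoid M) :
    Transitive (SubRel r K) :=
  fun _ _ _ hab hbc => htrans hab hbc

theorem WeaklyPositive.subRel (hwp : WeaklyPositive r) (K : Submonoid M) :
    WeaklyPositive (SubRel r K) :=
  ⟨fun x u v hu hv => hwp.1 x u v hu hv, fun x a b => hwp.2 x a b⟩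

theorem rIrred_of_rIrred_subRel {K : Submonoid M} {a : K} (hK : ∀ y : M, Dvd2 y a → y ∈ K)
    (ha : RIrred (SubRel r K) a) : RIrred r a := by
  refine ⟨ha.1, fun y z hy hz hya hza heq => ?_⟩
  have hyK : y ∈ K := hK y ⟨1, z, by rw [heq, one_mul]⟩
  have hzK : z ∈ K := hK z ⟨y, 1, by rw [heq, mul_one]⟩
  exact ha.2 ⟨y, hyK⟩ ⟨z, hzK⟩ hy hz hya hza (Subtype.ext heq)

theorem mem_germSub_of_dvd2 {x y : M} (h : Dvd2 y x) : y ∈ GermSub x :=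
  Submonoid.subset_closure h

end Germ

theorem stmt9_general {H : Type*} [Monoid H] (r : H → H → Prop)
    (htrans : Transitive r)
    (hwp : WeaklyPositive r)
    (hwlfgu : ∀ x : H, RNonUnit r x → IsFGU (SubRel r (GermSub x))) :
    Factorable r := by
  refine hwp.factorable_of_mem_closure fun x hx => ?_
  have hxK : x ∈ GermSub x := mem_germSub_of_dvd2 ⟨1, 1, by simp⟩
  have hK := mem_closure_rIrred_of_isFGU (transitive_subRel htrans _) (hwp.subRel _)
    (hwlfgu x hx) (x := ⟨x, hxK⟩) hx
  have hx' : x ∈ Submonoid.closure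
      ((GermSub x).subtype '' {a : GermSub x | RIrred (SubRel r (GermSub x)) a}) := by
    rw [← MonoidHom.map_mclosure (GermSub x).subtype]
    exact ⟨_, hK, rfl⟩
  refine Submonoid.closure_le.2 ?_ (mem_closure_dvd2_of_mem_closure hx')
  rintro _ ⟨⟨a, ha, rfl⟩, hax⟩
  exact Submonoid.subset_closure <|
    rIrred_of_rIrred_subRel (fun y hy => mem_germSub_of_dvd2 (Dvd2.trans hy hax)) ha

/-- Corollary 4.8. Every weakly l.f.g.u. weakly positive monoid is
factorable: if `(H, ≼)` is weakly positive and the germ of `(H, ≼)` at every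
`≼`-non-unit is f.g.u., then every `≼`-non-unit of `H` is a non-empty product of
`≼`-irreducibles. -/
theorem stmt9 {H : Type*} [Monoid H] (r : H → H → Prop)
    (hrefl : Reflexive r) (htrans : Transitive r)
    (hwp : WeaklyPositive r)
    (hwlfgu : ∀ x : H, RNonUnit r x → IsFGU (SubRel r (GermSub x))) :
    Factorable r :=
  stmt9_general r htrans hwp hwlfgu

end FactPaper
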